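/- Let A ∈ ℝ^{N×r} with rank(A) = r and orthonormal column-space basis U_A, let B ∈ ℝ^{N×n}, let B^⊥ = B − U_A U_Aᵀ B, and let R² = ‖B^⊥‖_F². Let p ∈ [0,1]^N be a probability distribution such that for some β ∈ (0,1], pᵢ ≥ β ℓᵢ(A)/r for all i ∈ [N], where ℓᵢ(A) = ‖U_A(i,:)‖₂², and let S ∈ ℝ^{s×N} ~ RandSample(s, p). Then for any ε > 0 and δ ∈ (0,1), if s ≥ 2r/(β δ ε), the condition ‖U_Aᵀ Sᵀ S B^⊥‖_F² ≤ ε R²/2 holds with probability at least 1 − δ. -/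

import Mathlib

open Matrix MeasureTheory

/-- Squared Frobenius norm of a real matrix. -/
noncomputable def frobSq {m n : Type*} [Fintype m] [Fintype n] (M : Matrix m n ℝ) : ℝ :=
  ∑ i, ∑ j, (M i j) ^ 2

/-- Square of the smallest singular value of a matrix, as the infimum of
squared norms `‖M x‖₂²` over unit vectors `x`. -/
noncomputable def sigmaMinSq {m n : Type*} [Fintype m] [Fintype n] (M : Matrix m n ℝ) : ℝ :=
  sInf {c : ℝ | ∃ x : n → ℝ, ∑ i, (x i) ^ 2 = 1 ∧ c = ∑ j, (M.mulVec x j) ^ 2}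

/-- Square of the largest singular value of a matrix. -/
noncomputable def sigmaMaxSq {m n : Type*} [Fintype m] [Fintype n] (M : Matrix m n ℝ) : ℝ :=
  sSup {c : ℝ | ∃ x : n → ℝ, ∑ i, (x i) ^ 2 = 1 ∧ c = ∑ j, (M.mulVec x j) ^ 2}

/-- The weighted row-sampling ("RandSample") matrix determined by the sampled
indices `ξ : Fin s → Fin N` and the sampling probabilities `p`:
`S j i = 1/√(s pᵢ)` if `ξ j = i` and `0` otherwise. -/
noncomputable def randSampleMatrix {N : ℕ} (s : ℕ) (p : Fin N → ℝ) (ξ : Fin s → Fin N) :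
    Matrix (Fin s) (Fin N) ℝ :=
  fun j i => if ξ j = i then 1 / Real.sqrt (s * p i) else 0

/-- The measure on `Fin N` in which index `i` has probability `p i`. -/
noncomputable def sampleMeasure {N : ℕ} (p : Fin N → ℝ) : Measure (Fin N) :=
  ∑ i, ENNReal.ofReal (p i) • Measure.dirac i

/-- The law of `s` i.i.d. indices, each drawn from the distribution `p` on `Fin N`. -/
noncomputable def sampleMeasurePi {N : ℕ} (s : ℕ) (p : Fin N → ℝ) :
    Measure (Fin s → Fin N) :=
  Measure.pi fun _ => sampleMeasure p

/-! Each entry `(k, l)` of `Uᵀ SᵀS B^⊥` is a sum `∑ⱼ h(ξⱼ)` of `s` i.i.d. terms with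
`h(i) = U(i,k) B^⊥(i,l) / (s pᵢ)`, and these have mean zero because `Uᵀ B^⊥ = 0`. So the expected
square of the entry is `s · E[h²]`, and summing over `(k, l)` the expected squared Frobenius norm is
`∑ᵢ ℓᵢ(A) ‖B^⊥(i,:)‖² / (s pᵢ) ≤ r R² / (β s) ≤ δ ε R² / 2` by the leverage condition and the
choice of `s`. Markov's inequality finishes. -/

open Finset

section ProductDistribution

variable {ι α : Type*} [Fintype ι] [DecidableEq ι] [Fintype α] {p : α → ℝ}

theorem sum_prod_eq_one (hp1 : ∑ i, p i = 1) : ∑ ξ : ι → α, ∏ a, p (ξ a) = 1 := by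
  rw [← Fintype.prod_sum fun _ i => p i]
  simp [hp1]

theorem sum_prod_mul_apply (hp1 : ∑ i, p i = 1) (f : α → ℝ) (j : ι) :
    ∑ ξ : ι → α, (∏ a, p (ξ a)) * f (ξ j) = ∑ i, p i * f i := by
  have hfactor : ∀ ξ : ι → α,
      (∏ a, p (ξ a)) * f (ξ j) = ∏ a, p (ξ a) * if a = j then f (ξ a) else 1 := by
    intro ξ
    rw [prod_mul_distrib, prod_ite_eq' univ j, if_pos (mem_univ j)]
  rw [sum_congr rfl fun ξ _ => hfactor ξ,
    ← Fintype.prod_sum fun a i => p i * if a = j then f i else 1,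
    prod_eq_single j (fun a _ ha => by simp [ha, hp1]) (by simp)]
  simp

theorem sum_prod_mul_apply_mul_apply (hp1 : ∑ i, p i = 1) (f g : α → ℝ) {j j' : ι}
    (hjj' : j ≠ j') :
    ∑ ξ : ι → α, (∏ a, p (ξ a)) * (f (ξ j) * g (ξ j')) =
      (∑ i, p i * f i) * ∑ i, p i * g i := by
  have hfactor : ∀ ξ : ι → α, (∏ a, p (ξ a)) * (f (ξ j) * g (ξ j')) =
      ∏ a, p (ξ a) * ((if a = j then f (ξ a) else 1) * if a = j' then g (ξ a) else 1) := by
    intro ξ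
    simp only [prod_mul_distrib, prod_ite_eq', mem_univ, if_true]
  rw [sum_congr rfl fun ξ _ => hfactor ξ, ← Fintype.prod_sum fun a i =>
      p i * ((if a = j then f i else 1) * if a = j' then g i else 1),
    prod_eq_mul j j' hjj' (fun a _ ha => by simp [ha.1, ha.2, hp1]) (by simp) (by simp)]
  simp [hjj', hjj'.symm]

theorem sum_prod_mul_sum_sq_of_mean_zero (hp1 : ∑ i, p i = 1) {h : α → ℝ}
    (hmean : ∑ i, p i * h i = 0) :
    ∑ ξ : ι → α, (∏ a, p (ξ a)) * (∑ j, h (ξ j)) ^ 2 =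
      Fintype.card ι * ∑ i, p i * h i ^ 2 := by
  have hcov : ∀ j j' : ι, ∑ ξ : ι → α, (∏ a, p (ξ a)) * (h (ξ j) * h (ξ j')) =
      if j = j' then ∑ i, p i * h i ^ 2 else 0 := by
    intro j j'
    split_ifs with hjj'
    · subst hjj'
      simp_rw [← sq]
      exact sum_prod_mul_apply hp1 (h ^ 2) j
    · rw [sum_prod_mul_apply_mul_apply hp1 h h hjj', hmean, zero_mul]
  calc ∑ ξ : ι → α, (∏ a, p (ξ a)) * (∑ j, h (ξ j)) ^ 2
      = ∑ j, ∑ j', ∑ ξ : ι → α, (∏ a, p (ξ a)) * (h (ξ j) * h (ξ j')) := by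
        simp_rw [sq, sum_mul_sum, mul_sum]
        rw [sum_comm]
        exact sum_congr rfl fun _ _ => sum_comm
    _ = Fintype.card ι * ∑ i, p i * h i ^ 2 := by
        simp [hcov]

end ProductDistribution

theorem one_sub_le_sum_filter_le {ι : Type*} [Fintype ι] {w f : ι → ℝ} {t δ : ℝ}
    (hw : ∀ i, 0 ≤ w i) (hw1 : ∑ i, w i = 1) (hf : ∀ i, 0 ≤ f i) (ht : 0 ≤ t) (hδ : 0 ≤ δ)
    (hmean : ∑ i, w i * f i ≤ δ * t) :
    1 - δ ≤ ∑ i with f i ≤ t, w i := by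
  have hsplit := sum_filter_add_sum_filter_not univ (fun i => f i ≤ t) w
  suffices ∑ i with ¬f i ≤ t, w i ≤ δ by linarith
  have hwf : ∀ i ∈ univ, 0 ≤ w i * f i := fun i _ => mul_nonneg (hw i) (hf i)
  rcases ht.eq_or_lt with rfl | ht
  · -- with `t = 0` the mean vanishes, so `f > 0` only where `w = 0`
    have hzero := (sum_eq_zero_iff_of_nonneg hwf).1
      (le_antisymm (by simpa using hmean) (sum_nonneg hwf))
    rw [sum_eq_zero fun i hi => ?_]
    · exact hδ
    · have hfi : 0 < f i := lt_of_not_ge (mem_filter.1 hi).2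
      simpa [hfi.ne'] using hzero i (mem_univ i)
  · refine le_of_mul_le_mul_left ?_ ht
    calc t * ∑ i with ¬f i ≤ t, w i
        = ∑ i with ¬f i ≤ t, w i * t := by rw [mul_sum]; simp_rw [mul_comm]
      _ ≤ ∑ i with ¬f i ≤ t, w i * f i :=
        sum_le_sum fun i hi =>
          mul_le_mul_of_nonneg_left (lt_of_not_ge (mem_filter.1 hi).2).le (hw i)
      _ ≤ ∑ i, w i * f i :=
        sum_le_sum_of_subset_of_nonneg (filter_subset _ _) fun i _ _ => hwf i (mem_univ i)
      _ ≤ t * δ := by linarith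

theorem sampleMeasure_singleton {N : ℕ} (p : Fin N → ℝ) (i : Fin N) :
    sampleMeasure p {i} = ENNReal.ofReal (p i) := by
  simp [sampleMeasure, Measure.dirac_apply', Set.indicator]

instance {N : ℕ} (p : Fin N → ℝ) : IsFiniteMeasure (sampleMeasure p) := by
  refine ⟨?_⟩
  simp [sampleMeasure]

theorem sampleMeasurePi_apply {N s : ℕ} {p : Fin N → ℝ} (hp0 : ∀ i, 0 ≤ p i)
    (E : Set (Fin s → Fin N)) [DecidablePred (· ∈ E)] :
    sampleMeasurePi s p E = ENNReal.ofReal (∑ ξ with ξ ∈ E, ∏ j, p (ξ j)) := by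
  have hE : E = ↑(univ.filter (· ∈ E)) := by ext; simp
  rw [ENNReal.ofReal_sum_of_nonneg fun ξ _ => prod_nonneg fun j _ => hp0 _]
  conv_lhs => rw [hE, ← sum_measure_singleton]
  refine sum_congr (by simp) fun ξ _ => ?_
  rw [sampleMeasurePi, ← Set.univ_pi_singleton ξ, Measure.pi_pi,
    ENNReal.ofReal_prod_of_nonneg fun j _ => hp0 _]
  simp [sampleMeasure_singleton]

theorem frobSq_nonneg {m n : Type*} [Fintype m] [Fintype n] (M : Matrix m n ℝ) :
    0 ≤ frobSq M :=
  sum_nonneg fun _ _ => sum_nonneg fun _ _ => sq_nonneg _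

section RandSample

variable {N s : ℕ} {p : Fin N → ℝ} {m n : Type*}

theorem randSampleMatrix_mul_apply (M : Matrix (Fin N) n ℝ) (ξ : Fin s → Fin N) (j : Fin s)
    (l : n) :
    (randSampleMatrix s p ξ * M) j l = M (ξ j) l / √(s * p (ξ j)) := by
  simp [mul_apply, randSampleMatrix, ite_mul, div_eq_inv_mul]

theorem transpose_mul_randSampleMatrix_mul_apply (hp0 : ∀ i, 0 ≤ p i) (U : Matrix (Fin N) m ℝ)
    (M : Matrix (Fin N) n ℝ) (ξ : Fin s → Fin N) (k : m) (l : n) :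
    (Uᵀ * (randSampleMatrix s p ξ)ᵀ * (randSampleMatrix s p ξ * M)) k l =
      ∑ j, U (ξ j) k * M (ξ j) l / (s * p (ξ j)) := by
  rw [← transpose_mul, mul_apply]
  refine sum_congr rfl fun j _ => ?_
  rw [transpose_apply, randSampleMatrix_mul_apply, randSampleMatrix_mul_apply,
    div_mul_div_comm, Real.mul_self_sqrt (mul_nonneg s.cast_nonneg (hp0 _))]

theorem sum_prod_mul_frobSq_randSampleMatrix [Fintype m] [Fintype n] (hp0 : ∀ i, 0 ≤ p i)
    (hp1 : ∑ i, p i = 1)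
    (U : Matrix (Fin N) m ℝ) (M : Matrix (Fin N) n ℝ) (hUM : Uᵀ * M = 0)
    (hU : ∀ i, p i = 0 → ∀ k, U i k = 0) :
    ∑ ξ : Fin s → Fin N, (∏ j, p (ξ j)) *
        frobSq (Uᵀ * (randSampleMatrix s p ξ)ᵀ * (randSampleMatrix s p ξ * M)) =
      ∑ i, (∑ k, U i k ^ 2) * (∑ l, M i l ^ 2) / (s * p i) := by
  have mul_div_sq : ∀ x a : ℝ, x * (a / x) ^ 2 = a ^ 2 / x := by
    intro x a
    rcases eq_or_ne x 0 with rfl | hx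
    · simp
    · field_simp
  set h : m → n → Fin N → ℝ := fun k l i => U i k * M i l / (s * p i)
  have hmean : ∀ k l, ∑ i, p i * h k l i = 0 := by
    intro k l
    have hterm : ∀ i, p i * h k l i = U i k * M i l / s := by
      intro i
      rcases eq_or_ne (p i) 0 with hpi | hpi
      · simp [h, hpi, hU i hpi k]
      · simp only [h]
        field_simp
    have hUM_kl : ∑ i, U i k * M i l = 0 := by simpa [mul_apply] using congrFun₂ hUM k l
    rw [sum_congr rfl fun i _ => hterm i, ← sum_div, hUM_kl, zero_div]
  calc ∑ ξ : Fin s → Fin N, (∏ j, p (ξ j)) *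
        frobSq (Uᵀ * (randSampleMatrix s p ξ)ᵀ * (randSampleMatrix s p ξ * M))
      = ∑ k, ∑ l, ∑ ξ : Fin s → Fin N, (∏ j, p (ξ j)) * (∑ j, h k l (ξ j)) ^ 2 := by
        simp_rw [frobSq, transpose_mul_randSampleMatrix_mul_apply hp0, mul_sum]
        rw [sum_comm]
        exact sum_congr rfl fun _ _ => sum_comm
    _ = ∑ k, ∑ l, ∑ i, (U i k * M i l) ^ 2 / (s * p i) := by
        simp_rw [sum_prod_mul_sum_sq_of_mean_zero hp1 (hmean _ _), Fintype.card_fin, mul_sum,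
          h, ← mul_assoc, mul_div_sq]
    _ = ∑ k, ∑ i, ∑ l, (U i k * M i l) ^ 2 / (s * p i) := sum_congr rfl fun _ _ => sum_comm
    _ = ∑ i, ∑ k, ∑ l, (U i k * M i l) ^ 2 / (s * p i) := sum_comm
    _ = ∑ i, (∑ k, U i k ^ 2) * (∑ l, M i l ^ 2) / (s * p i) := by
        refine sum_congr rfl fun i _ => ?_
        rw [sum_mul_sum, sum_div]
        simp_rw [sum_div, mul_pow]

end RandSample

theorem sum_mul_div_le_of_mul_le {N s : ℕ} {ℓ b p : Fin N → ℝ} {β r : ℝ} (hβ : 0 < β)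
    (hr : 0 ≤ r) (hp0 : ∀ i, 0 ≤ p i) (hb : ∀ i, 0 ≤ b i) (hlev : ∀ i, β * ℓ i ≤ r * p i) :
    ∑ i, ℓ i * b i / (s * p i) ≤ r / (β * s) * ∑ i, b i := by
  rw [mul_sum]
  refine sum_le_sum fun i _ => ?_
  rcases (mul_nonneg s.cast_nonneg (hp0 i)).eq_or_lt with hsp | hsp
  · rw [← hsp, div_zero]
    exact mul_nonneg (div_nonneg hr (by positivity)) (hb i)
  · have hs : (0 : ℝ) < s := lt_of_le_of_ne s.cast_nonneg fun h => by simp [← h] at hsp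
    rw [mul_div_right_comm]
    refine mul_le_mul_of_nonneg_right ?_ (hb i)
    rw [div_le_div_iff₀ hsp (by positivity)]
    calc ℓ i * (β * s) = s * (β * ℓ i) := by ring
      _ ≤ s * (r * p i) := mul_le_mul_of_nonneg_left (hlev i) hs.le
      _ = r * (s * p i) := by ring

theorem mul_sum_sq_le_of_div_le {r : ℕ} {β q : ℝ} (x : Fin r → ℝ)
    (h : β * (∑ j, x j ^ 2) / r ≤ q) : β * ∑ j, x j ^ 2 ≤ r * q := by
  rcases r.eq_zero_or_pos with rfl | hr
  · simp
  · exact (div_le_iff₀' (by positivity)).1 h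

theorem eq_zero_of_mul_sum_sq_nonpos {ι : Type*} [Fintype ι] {β : ℝ} {x : ι → ℝ} (hβ : 0 < β)
    (h : β * ∑ j, x j ^ 2 ≤ 0) : x = 0 := by
  have hsum : ∑ j, x j ^ 2 = 0 :=
    le_antisymm (nonpos_of_mul_nonpos_right h hβ) (sum_nonneg fun j _ => sq_nonneg _)
  ext j
  exact pow_eq_zero_iff two_ne_zero |>.1
    ((sum_eq_zero_iff_of_nonneg fun j _ => sq_nonneg (x j)).1 hsum j (mem_univ j))

theorem div_mul_le_of_two_mul_div_le {r s β δ ε : ℝ} (hβ : 0 < β) (hδ : 0 < δ) (hε : 0 < ε)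
    (hs : 0 ≤ s) (h : 2 * r / (β * δ * ε) ≤ s) : r / (β * s) ≤ δ * ε / 2 := by
  rcases hs.eq_or_lt with rfl | hs
  · rw [mul_zero, div_zero]
    positivity
  · rw [div_le_iff₀ (by positivity)] at h
    rw [div_le_iff₀ (by positivity)]
    nlinarith

theorem leverage_sampling_sc2_general {N r n s : ℕ}
    (U : Matrix (Fin N) (Fin r) ℝ) (hU : Uᵀ * U = 1)
    (B : Matrix (Fin N) (Fin n) ℝ)
    (Bperp : Matrix (Fin N) (Fin n) ℝ) (hBperp : Bperp = B - U * (Uᵀ * B))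
    (Rsq : ℝ) (hRsq : Rsq = frobSq Bperp)
    (p : Fin N → ℝ) (hp0 : ∀ i, 0 ≤ p i) (hp1 : ∑ i, p i = 1)
    (β : ℝ) (hβ : β ∈ Set.Ioc (0 : ℝ) 1)
    (hlev : ∀ i, β * (∑ j, (U i j) ^ 2) / r ≤ p i)
    (ε δ : ℝ) (hε : 0 < ε) (hδ : δ ∈ Set.Ioo (0 : ℝ) 1)
    (hsamp : (s : ℝ) ≥ 2 * r / (β * δ * ε)) :
    sampleMeasurePi s p
        {ξ | frobSq (Uᵀ * (randSampleMatrix s p ξ)ᵀ * (randSampleMatrix s p ξ * Bperp))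
          ≤ ε * Rsq / 2}
      ≥ ENNReal.ofReal (1 - δ) := by
  obtain ⟨hβ0, -⟩ := hβ
  obtain ⟨hδ0, -⟩ := hδ
  have hRsq0 : 0 ≤ Rsq := hRsq ▸ frobSq_nonneg Bperp
  have hlev' : ∀ i, β * ∑ j, U i j ^ 2 ≤ r * p i := fun i => mul_sum_sq_le_of_div_le _ (hlev i)
  have hU0 : ∀ i, p i = 0 → ∀ k, U i k = 0 := fun i hpi =>
    congrFun (eq_zero_of_mul_sum_sq_nonpos hβ0 ((hlev' i).trans_eq (by simp [hpi])))
  have hUBperp : Uᵀ * Bperp = 0 := by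
    rw [hBperp, Matrix.mul_sub, ← Matrix.mul_assoc, hU, Matrix.one_mul, sub_self]
  have hrate : (r : ℝ) / (β * s) ≤ δ * ε / 2 :=
    div_mul_le_of_two_mul_div_le hβ0 hδ0 hε s.cast_nonneg hsamp
  have hmean : ∑ ξ : Fin s → Fin N, (∏ j, p (ξ j)) *
      frobSq (Uᵀ * (randSampleMatrix s p ξ)ᵀ * (randSampleMatrix s p ξ * Bperp)) ≤
        δ * (ε * Rsq / 2) := by
    rw [sum_prod_mul_frobSq_randSampleMatrix hp0 hp1 U Bperp hUBperp hU0]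
    calc _ ≤ r / (β * s) * Rsq := hRsq ▸ sum_mul_div_le_of_mul_le hβ0 r.cast_nonneg hp0
          (fun i => sum_nonneg fun l _ => sq_nonneg (Bperp i l)) hlev'
      _ ≤ δ * ε / 2 * Rsq := mul_le_mul_of_nonneg_right hrate hRsq0
      _ = δ * (ε * Rsq / 2) := by ring
  rw [ge_iff_le, sampleMeasurePi_apply hp0]
  exact ENNReal.ofReal_le_ofReal <| one_sub_le_sum_filter_le
    (fun ξ => prod_nonneg fun j _ => hp0 _) (sum_prod_eq_one hp1) (fun ξ => frobSq_nonneg _)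
    (by positivity) hδ0.le hmean

/-- Lemma 4.4, structural condition SC2 via leverage score sampling.
If `pᵢ ≥ β ℓᵢ(A)/r` and `s ≥ 2r/(β δ ε)`, then `‖U_Aᵀ Sᵀ S B^⊥‖_F² ≤ ε R²/2`
holds with probability at least `1 − δ`. -/
theorem leverage_sampling_sc2 {N r n s : ℕ} (hs : 0 < s)
    (A : Matrix (Fin N) (Fin r) ℝ) (hA : A.rank = r)
    (U : Matrix (Fin N) (Fin r) ℝ) (hU : Uᵀ * U = 1)
    (hrange : LinearMap.range A.mulVecLin = LinearMap.range U.mulVecLin)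
    (B : Matrix (Fin N) (Fin n) ℝ)
    (Bperp : Matrix (Fin N) (Fin n) ℝ) (hBperp : Bperp = B - U * (Uᵀ * B))
    (Rsq : ℝ) (hRsq : Rsq = frobSq Bperp)
    (p : Fin N → ℝ) (hp0 : ∀ i, 0 ≤ p i) (hp1 : ∑ i, p i = 1)
    (β : ℝ) (hβ : β ∈ Set.Ioc (0 : ℝ) 1)
    (hlev : ∀ i, β * (∑ j, (U i j) ^ 2) / r ≤ p i)
    (ε δ : ℝ) (hε : 0 < ε) (hδ : δ ∈ Set.Ioo (0 : ℝ) 1)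
    (hsamp : (s : ℝ) ≥ 2 * r / (β * δ * ε)) :
    sampleMeasurePi s p
        {ξ | frobSq (Uᵀ * (randSampleMatrix s p ξ)ᵀ * (randSampleMatrix s p ξ * Bperp))
          ≤ ε * Rsq / 2}
      ≥ ENNReal.ofReal (1 - δ) :=
  leverage_sampling_sc2_general U hU B Bperp hBperp Rsq hRsq p hp0 hp1 β hβ hlev ε δ hε hδ hsamp
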